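/- Let (α_j)_{j≥0} be a sequence in (0,1) and define x₁ = 1/2 and x_n = h_{α₀} ∘ h_{α₁} ∘ ⋯ ∘ h_{α_{n−2}}(1/2) for n ≥ 2, where h_α : [0,1] → [0,1/2] is the inverse of the left branch x ↦ x(1+(2x)^α) of T_α. Then for every n ≥ 2: (i) for every point u of the open interval (x_n, x_{n−1}), the iterates u, T_{α₀}(u), T_{α₁}(T_{α₀}(u)), …, up to the (n−2)-nd iterate, all lie in (0,1/2); and (ii) the composition T_{α_{n−2}} ∘ ⋯ ∘ T_{α₁} ∘ T_{α₀}, restricted to (x_n, x_{n−1}), is continuous, strictly increasing, and maps (x_n, x_{n−1}) onto (1/2, 1). -/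
import Mathlib

open Set

/-- The intermittent circle map `T_α` on `[0,1)`. -/
noncomputable def Tmap (α x : ℝ) : ℝ :=
  if x < 1/2 then x * (1 + (2 * x) ^ α) else x - 2 ^ α * (1 - x) ^ (1 + α)

/-- `Titer α k = T_{α_{k−1}} ∘ ⋯ ∘ T_{α_1} ∘ T_{α_0}`. -/
noncomputable def Titer (α : ℕ → ℝ) : ℕ → ℝ → ℝ
  | 0 => id
  | k + 1 => fun u => Tmap (α k) (Titer α k u)

/-- The random backward orbit of `1/2` under the inverses `h` of the left branches:
`xseq h α 0 = 1/2 = x₁` and `xseq h α n = h_{α₀} ∘ h_{α₁} ∘ ⋯ ∘ h_{α_{n−1}} (1/2) = x_{n+1}`. -/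
noncomputable def xseq (h : ℝ → ℝ → ℝ) : (ℕ → ℝ) → ℕ → ℝ
  | _, 0 => 1/2
  | α, n + 1 => h (α 0) (xseq h (fun j => α (j + 1)) n)

/-- the left branch -/
noncomputable def gmap (a x : ℝ) : ℝ := x * (1 + (2 * x) ^ a)

lemma gmap_cont (a : ℝ) (ha : 0 < a) : Continuous (gmap a) := by
  apply continuous_id.mul
  apply continuous_const.add
  rw [continuous_iff_continuousAt]
  intro x
  exact (Real.continuousAt_rpow_const _ _ (Or.inr ha.le)).comp (by fun_prop)

lemma gmap_mono (a : ℝ) (ha : 0 < a) : StrictMonoOn (gmap a) (Icc 0 (1/2)) := by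
  intro x hx y hy hxy
  have h1 : (0:ℝ) < 1 + (2*x)^a := by
    have := Real.rpow_nonneg (by linarith [hx.1] : (0:ℝ) ≤ 2*x) a
    linarith
  have h2 : (2*x)^a ≤ (2*y)^a :=
    Real.rpow_le_rpow (by linarith [hx.1]) (by linarith) ha.le
  have hy0 : 0 < y := lt_of_le_of_lt hx.1 hxy
  unfold gmap
  calc x * (1 + (2*x)^a) < y * (1 + (2*x)^a) := by nlinarith
    _ ≤ y * (1 + (2*y)^a) := by nlinarith

lemma gmap_zero (a : ℝ) : gmap a 0 = 0 := by simp [gmap]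
lemma gmap_half (a : ℝ) : gmap a (1/2) = 1 := by norm_num [gmap, Real.one_rpow]

section

variable (h : ℝ → ℝ → ℝ)
  (hinv : ∀ a ∈ Ioo (0:ℝ) 1, ∀ y ∈ Icc (0:ℝ) 1,
      h a y ∈ Icc (0:ℝ) (1/2) ∧ h a y * (1 + (2 * h a y) ^ a) = y)

include hinv

lemma h_spec {a : ℝ} (ha : a ∈ Ioo (0:ℝ) 1) {y : ℝ} (hy : y ∈ Icc (0:ℝ) 1) :
    h a y ∈ Icc (0:ℝ) (1/2) ∧ gmap a (h a y) = y := hinv a ha y hy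

lemma h_mem {a : ℝ} (ha : a ∈ Ioo (0:ℝ) 1) {y : ℝ} (hy : y ∈ Ioo (0:ℝ) 1) :
    h a y ∈ Ioo (0:ℝ) (1/2) := by
  obtain ⟨hm, he⟩ := h_spec h hinv ha (Ioo_subset_Icc_self hy)
  constructor
  · rcases eq_or_lt_of_le hm.1 with h0 | h0
    · exfalso; rw [← h0] at he; rw [gmap_zero] at he; linarith [hy.1]
    · exact h0
  · rcases eq_or_lt_of_le hm.2 with h0 | h0
    · exfalso; rw [h0, gmap_half] at he; linarith [hy.2]
    · exact h0

lemma h_mono {a : ℝ} (ha : a ∈ Ioo (0:ℝ) 1) {y₁ y₂ : ℝ} (hy₁ : y₁ ∈ Icc (0:ℝ) 1)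
    (hy₂ : y₂ ∈ Icc (0:ℝ) 1) (hlt : y₁ < y₂) : h a y₁ < h a y₂ := by
  obtain ⟨hm1, he1⟩ := h_spec h hinv ha hy₁
  obtain ⟨hm2, he2⟩ := h_spec h hinv ha hy₂
  by_contra hc
  push_neg at hc
  have := (gmap_mono a ha.1).monotoneOn hm2 hm1 hc
  rw [he1, he2] at this
  linarith

lemma xseq_mem : ∀ (n : ℕ) (α : ℕ → ℝ), (∀ j, α j ∈ Ioo (0:ℝ) 1) →
    xseq h α n ∈ Ioc (0:ℝ) (1/2) := by
  intro n
  induction n with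
  | zero => intro α hα; exact ⟨by norm_num [xseq], by norm_num [xseq]⟩
  | succ n ih =>
    intro α hα
    have h1 := ih (fun j => α (j+1)) (fun j => hα (j+1))
    have h2 : xseq h (fun j => α (j+1)) n ∈ Ioo (0:ℝ) 1 := ⟨h1.1, by linarith [h1.2]⟩
    exact Ioo_subset_Ioc_self (h_mem h hinv (hα 0) h2)

lemma xseq_icc (n : ℕ) (α : ℕ → ℝ) (hα : ∀ j, α j ∈ Ioo (0:ℝ) 1) :
    xseq h α n ∈ Icc (0:ℝ) 1 := by
  have := xseq_mem h hinv n α hα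
  exact ⟨this.1.le, by linarith [this.2]⟩

lemma xseq_lt : ∀ (n : ℕ) (α : ℕ → ℝ), (∀ j, α j ∈ Ioo (0:ℝ) 1) →
    xseq h α (n+1) < xseq h α n := by
  intro n
  induction n with
  | zero =>
    intro α hα
    show h (α 0) (xseq h _ 0) < 1/2
    have := h_mem h hinv (hα 0) (y := xseq h (fun j => α (j+1)) 0) (by norm_num [xseq])
    exact this.2
  | succ n ih =>
    intro α hα
    exact h_mono h hinv (hα 0)
      (xseq_icc h hinv _ _ (fun j => hα (j+1)))
      (xseq_icc h hinv _ _ (fun j => hα (j+1)))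
      (ih (fun j => α (j+1)) (fun j => hα (j+1)))

end

lemma Titer_shift (α : ℕ → ℝ) : ∀ (k : ℕ) (u : ℝ),
    Titer α (k+1) u = Titer (fun j => α (j+1)) k (Tmap (α 0) u) := by
  intro k
  induction k with
  | zero => intro u; rfl
  | succ k ih =>
    intro u
    show Tmap (α (k+1)) (Titer α (k+1) u) = Tmap (α (k+1)) (Titer (fun j => α (j+1)) k (Tmap (α 0) u))
    rw [ih]

lemma Tmap_eq_gmap {a x : ℝ} (hx : x < 1/2) : Tmap a x = gmap a x := if_pos hx

/-- image of an open interval under gmap -/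
lemma gmap_image {a : ℝ} (ha : 0 < a) {p q : ℝ} (hp : p ∈ Icc (0:ℝ) (1/2))
    (hq : q ∈ Icc (0:ℝ) (1/2)) (hpq : p < q) :
    gmap a '' Ioo p q = Ioo (gmap a p) (gmap a q) := by
  apply Subset.antisymm
  · rintro _ ⟨x, hx, rfl⟩
    have hx1 : x ∈ Icc (0:ℝ) (1/2) := ⟨le_trans hp.1 hx.1.le, le_trans hx.2.le hq.2⟩
    exact ⟨gmap_mono a ha hp hx1 hx.1, gmap_mono a ha hx1 hq hx.2⟩
  · exact intermediate_value_Ioo hpq.le ((gmap_cont a ha).continuousOn)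

/-- the main induction -/
lemma main_ind (h : ℝ → ℝ → ℝ)
    (hinv : ∀ a ∈ Ioo (0:ℝ) 1, ∀ y ∈ Icc (0:ℝ) 1,
      h a y ∈ Icc (0:ℝ) (1/2) ∧ h a y * (1 + (2 * h a y) ^ a) = y) :
    ∀ (m : ℕ) (α : ℕ → ℝ), (∀ j, α j ∈ Ioo (0:ℝ) 1) →
    (∀ u ∈ Ioo (xseq h α (m+1)) (xseq h α m),
      ∀ k ≤ m, Titer α k u ∈ Ioo (0:ℝ) (1/2)) ∧
    ContinuousOn (Titer α (m+1)) (Ioo (xseq h α (m+1)) (xseq h α m)) ∧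
    StrictMonoOn (Titer α (m+1)) (Ioo (xseq h α (m+1)) (xseq h α m)) ∧
    Titer α (m+1) '' Ioo (xseq h α (m+1)) (xseq h α m) = Ioo (1/2 : ℝ) 1 := by
  intro m
  induction m with
  | zero =>
    intro α hα
    have hx1 : xseq h α 1 = h (α 0) (1/2) := rfl
    have hx0 : xseq h α 0 = 1/2 := rfl
    have ha0 := hα 0
    have hh : h (α 0) (1/2) ∈ Icc (0:ℝ) (1/2) ∧ gmap (α 0) (h (α 0) (1/2)) = 1/2 :=
      h_spec h hinv ha0 (by norm_num)
    have hsub : Ioo (xseq h α 1) (xseq h α 0) ⊆ Ioo (0:ℝ) (1/2) := by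
      rw [hx1, hx0]
      intro u hu
      exact ⟨lt_of_le_of_lt hh.1.1 hu.1, hu.2⟩
    have heq : EqOn (Titer α 1) (gmap (α 0)) (Ioo (xseq h α 1) (xseq h α 0)) := by
      intro u hu
      exact Tmap_eq_gmap (hsub hu).2
    refine ⟨?_, ?_, ?_, ?_⟩
    · intro u hu k hk
      interval_cases k
      exact hsub hu
    · exact ContinuousOn.congr ((gmap_cont (α 0) ha0.1).continuousOn) heq
    · exact StrictMonoOn.congr ((gmap_mono (α 0) ha0.1).mono
        (by rw [hx1, hx0]; exact Ioo_subset_Icc_self.trans (Icc_subset_Icc hh.1.1 le_rfl))) heq.symm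
    · rw [image_congr heq, hx1, hx0, gmap_image ha0.1 hh.1 (by norm_num)
        (h_mem h hinv ha0 (by norm_num)).2, hh.2, gmap_half]
  | succ m ih =>
    intro α hα
    set β := fun j => α (j+1) with hβ
    have hβα : ∀ j, β j ∈ Ioo (0:ℝ) 1 := fun j => hα (j+1)
    obtain ⟨ih1, ih2, ih3, ih4⟩ := ih β hβα
    have ha0 := hα 0
    -- endpoints
    have hy1 := xseq_icc h hinv (m+1) β hβα
    have hy0 := xseq_icc h hinv m β hβα
    have hx2 : xseq h α (m+2) = h (α 0) (xseq h β (m+1)) := rfl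
    have hx1 : xseq h α (m+1) = h (α 0) (xseq h β m) := rfl
    have hspec2 := h_spec h hinv ha0 hy1
    have hspec1 := h_spec h hinv ha0 hy0
    have hlt : xseq h α (m+2) < xseq h α (m+1) := xseq_lt h hinv (m+1) α hα
    have hsub : Ioo (xseq h α (m+2)) (xseq h α (m+1)) ⊆ Ioo (0:ℝ) (1/2) := by
      intro u hu
      rw [hx2] at hu
      rw [hx1] at hu
      exact ⟨lt_of_le_of_lt hspec2.1.1 hu.1, lt_of_lt_of_le hu.2 hspec1.1.2⟩
    have heq : EqOn (fun u => Tmap (α 0) u) (gmap (α 0)) (Ioo (xseq h α (m+2)) (xseq h α (m+1))) :=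
      fun u hu => Tmap_eq_gmap (hsub hu).2
    -- Tmap (α 0) maps the interval onto Ioo (xseq h β (m+1)) (xseq h β m)
    have himg : (fun u => Tmap (α 0) u) '' Ioo (xseq h α (m+2)) (xseq h α (m+1))
        = Ioo (xseq h β (m+1)) (xseq h β m) := by
      rw [image_congr heq, hx2, hx1, gmap_image ha0.1 hspec2.1 hspec1.1 (by rw [← hx2, ← hx1]; exact hlt),
        hspec2.2, hspec1.2]
    have hmaps : MapsTo (fun u => Tmap (α 0) u) (Ioo (xseq h α (m+2)) (xseq h α (m+1)))
        (Ioo (xseq h β (m+1)) (xseq h β m)) := by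
      rw [← himg]; exact mapsTo_image _ _
    have hgmono : StrictMonoOn (fun u => Tmap (α 0) u) (Ioo (xseq h α (m+2)) (xseq h α (m+1))) :=
      StrictMonoOn.congr ((gmap_mono (α 0) ha0.1).mono
        (hsub.trans (Ioo_subset_Icc_self))) heq.symm
    have hgcont : ContinuousOn (fun u => Tmap (α 0) u) (Ioo (xseq h α (m+2)) (xseq h α (m+1))) :=
      ContinuousOn.congr ((gmap_cont (α 0) ha0.1).continuousOn) heq
    have hcomp : ∀ k u, Titer α (k+1) u = Titer β k (Tmap (α 0) u) := fun k u => Titer_shift α k u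
    refine ⟨?_, ?_, ?_, ?_⟩
    · intro u hu k hk
      match k with
      | 0 => exact hsub hu
      | k + 1 =>
        rw [hcomp]
        exact ih1 _ (hmaps hu) k (by omega)
    · intro u hu
      have : Titer α (m+2) = fun u => Titer β (m+1) (Tmap (α 0) u) := funext (hcomp (m+1))
      rw [this]
      exact (ih2.comp hgcont hmaps) u hu
    · intro u hu v hv huv
      rw [hcomp, hcomp]
      exact ih3 (hmaps hu) (hmaps hv) (hgmono hu hv huv)
    · have : Titer α (m+2) = fun u => Titer β (m+1) (Tmap (α 0) u) := funext (hcomp (m+1))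
      show Titer α (m+2) '' Ioo (xseq h α (m+2)) (xseq h α (m+1)) = Ioo (1/2 : ℝ) 1
      rw [this, ← image_image (Titer β (m+1)) (fun u => Tmap (α 0) u), himg, ih4]

theorem markov_full_branch (α : ℕ → ℝ) (hα : ∀ j, α j ∈ Ioo (0:ℝ) 1)
    (h : ℝ → ℝ → ℝ)
    (hinv : ∀ a ∈ Ioo (0:ℝ) 1, ∀ y ∈ Icc (0:ℝ) 1,
      h a y ∈ Icc (0:ℝ) (1/2) ∧ h a y * (1 + (2 * h a y) ^ a) = y)
    (n : ℕ) (hn : 2 ≤ n) :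
    (∀ u ∈ Ioo (xseq h α (n - 1)) (xseq h α (n - 2)),
      ∀ k ≤ n - 2, Titer α k u ∈ Ioo (0:ℝ) (1/2)) ∧
    ContinuousOn (Titer α (n - 1)) (Ioo (xseq h α (n - 1)) (xseq h α (n - 2))) ∧
    StrictMonoOn (Titer α (n - 1)) (Ioo (xseq h α (n - 1)) (xseq h α (n - 2))) ∧
    Titer α (n - 1) '' Ioo (xseq h α (n - 1)) (xseq h α (n - 2)) = Ioo (1/2 : ℝ) 1 := by
  obtain ⟨m, rfl⟩ : ∃ m, n = m + 2 := ⟨n - 2, by omega⟩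
  have h1 : m + 2 - 1 = m + 1 := by omega
  have h2 : m + 2 - 2 = m := by omega
  rw [h1, h2]
  exact main_ind h hinv m α hα
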